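/- Let φ < 1 and α > 0, and set I(V) := ∫₁^V u^{(α−1)/(α+1)} 𝒥(u) du for V ≥ 2. Then there exist constants 0 < c₁ ≤ c₂ such that for all V ≥ 2: if φ(α+1) < 2 then c₁ ≤ I(V) ≤ c₂; if φ(α+1) > 2 then c₁ V^{φ − 2/(α+1)} ≤ I(V) ≤ c₂ V^{φ − 2/(α+1)}; and if φ(α+1) = 2 then c₁ ln V ≤ I(V) ≤ c₂ ln V. -/
import Mathlib

open MeasureTheory Real

/-- `C_φ = (2−φ)/(1−φ)`, the right endpoint of the support of the power-law density. -/
noncomputable def Cphi (φ : ℝ) : ℝ := (2 - φ) / (1 - φ)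

/-- The power-law density `p(λ) = (1−φ) C_φ^{φ−1} λ^{−φ}` on `(0, C_φ)`. -/
noncomputable def pden (φ l : ℝ) : ℝ := (1 - φ) * Cphi φ ^ (φ - 1) * l ^ (-φ)

/-- `𝒥(x) = ∫₀^{C_φ} λ e^{−2λx} p(λ) dλ`. -/
noncomputable def calJ (φ x : ℝ) : ℝ :=
  ∫ l in Set.Ioo (0:ℝ) (Cphi φ), l * Real.exp (-2 * l * x) * pden φ l

/-- `I(V) = ∫₁^V u^{(α−1)/(α+1)} 𝒥(u) du`. -/
noncomputable def Ifun (φ α V : ℝ) : ℝ :=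
  ∫ u in (1:ℝ)..V, u ^ ((α - 1) / (α + 1)) * calJ φ u

/- ### Auxiliary machinery -/

noncomputable def gfun (φ t : ℝ) : ℝ := t ^ (1 - φ) * Real.exp (-2 * t)

noncomputable def Gfun (φ y : ℝ) : ℝ := ∫ t in (0:ℝ)..y, gfun φ t

noncomputable def Kc (φ : ℝ) : ℝ := (1 - φ) * Cphi φ ^ (φ - 1)

noncomputable def Hc (φ : ℝ) : ℝ := ∫ t in Set.Ioi (0:ℝ), Real.exp (-t) * t ^ (1 - φ)

lemma Cphi_pos {φ : ℝ} (hφ : φ < 1) : 0 < Cphi φ :=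
  div_pos (by linarith) (by linarith)

lemma Kc_pos {φ : ℝ} (hφ : φ < 1) : 0 < Kc φ :=
  mul_pos (by linarith) (Real.rpow_pos_of_pos (Cphi_pos hφ) _)

lemma gcont {φ : ℝ} (hφ : φ < 1) : Continuous (gfun φ) := by
  apply Continuous.mul _ (by continuity)
  rw [continuous_iff_continuousAt]
  intro x
  exact Real.continuousAt_rpow_const x _ (Or.inr (by linarith))

lemma gnonneg {φ : ℝ} (t : ℝ) (ht : 0 ≤ t) : 0 ≤ gfun φ t :=
  mul_nonneg (Real.rpow_nonneg ht _) (Real.exp_pos _).le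

lemma gpos {φ : ℝ} (t : ℝ) (ht : 0 < t) : 0 < gfun φ t :=
  mul_pos (Real.rpow_pos_of_pos ht _) (Real.exp_pos _)

lemma Gcont {φ : ℝ} (hφ : φ < 1) : Continuous (Gfun φ) :=
  intervalIntegral.continuous_primitive (fun _ _ => (gcont hφ).intervalIntegrable _ _) 0

lemma Gmono {φ : ℝ} (hφ : φ < 1) {a b : ℝ} (ha : 0 ≤ a) (hab : a ≤ b) :
    Gfun φ a ≤ Gfun φ b := by
  have h1 : Gfun φ a + ∫ t in a..b, gfun φ t = Gfun φ b :=
    intervalIntegral.integral_add_adjacent_intervals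
      ((gcont hφ).intervalIntegrable _ _) ((gcont hφ).intervalIntegrable _ _)
  have h2 : 0 ≤ ∫ t in a..b, gfun φ t :=
    intervalIntegral.integral_nonneg hab (fun t ht => gnonneg t (le_trans ha ht.1))
  linarith

lemma Gpos {φ : ℝ} (hφ : φ < 1) {y : ℝ} (hy : 0 < y) : 0 < Gfun φ y :=
  intervalIntegral.intervalIntegral_pos_of_pos_on ((gcont hφ).intervalIntegrable _ _)
    (fun t ht => gpos t ht.1) hy

lemma G_le_H {φ : ℝ} (hφ : φ < 1) {y : ℝ} (hy : 0 ≤ y) : Gfun φ y ≤ Hc φ := by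
  have hint : IntegrableOn (fun t => Real.exp (-t) * t ^ ((2 - φ) - 1)) (Set.Ioi (0:ℝ)) :=
    Real.GammaIntegral_convergent (by linarith : (0:ℝ) < 2 - φ)
  have hint' : IntegrableOn (fun t => Real.exp (-t) * t ^ (1 - φ)) (Set.Ioi (0:ℝ)) := by
    have : ((2 - φ) - 1) = 1 - φ := by ring
    rwa [this] at hint
  have h1 : Gfun φ y = ∫ t in Set.Ioc (0:ℝ) y, gfun φ t :=
    intervalIntegral.integral_of_le hy
  rw [h1]
  have h2 : (∫ t in Set.Ioc (0:ℝ) y, gfun φ t) ≤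
      ∫ t in Set.Ioc (0:ℝ) y, Real.exp (-t) * t ^ (1 - φ) := by
    apply setIntegral_mono_on ((gcont hφ).integrableOn_Ioc)
      (hint'.mono_set Set.Ioc_subset_Ioi_self) measurableSet_Ioc
    intro t ht
    rw [gfun, mul_comm]
    apply mul_le_mul_of_nonneg_right _ (Real.rpow_nonneg ht.1.le _)
    exact Real.exp_le_exp.2 (by linarith [ht.1])
  refine h2.trans ?_
  apply setIntegral_mono_set hint'
  · filter_upwards [ae_restrict_mem measurableSet_Ioi] with t ht
    exact mul_nonneg (Real.exp_pos _).le (Real.rpow_nonneg ht.le _)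
  · exact HasSubset.Subset.eventuallyLE Set.Ioc_subset_Ioi_self

lemma calJ_eq {φ : ℝ} (hφ : φ < 1) {x : ℝ} (hx : 0 < x) :
    calJ φ x = Kc φ * x ^ (φ - 2) * Gfun φ (x * Cphi φ) := by
  have hC := Cphi_pos hφ
  have h1 : calJ φ x = ∫ l in (0:ℝ)..(Cphi φ), l * Real.exp (-2 * l * x) * pden φ l := by
    rw [calJ, intervalIntegral.integral_of_le hC.le, integral_Ioc_eq_integral_Ioo]
  rw [h1]
  have h2 : ∀ l ∈ Set.uIcc (0:ℝ) (Cphi φ),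
      l * Real.exp (-2 * l * x) * pden φ l = Kc φ * (x ^ (φ - 1) * gfun φ (x * l)) := by
    intro l hl
    rw [Set.uIcc_of_le hC.le] at hl
    rcases eq_or_lt_of_le hl.1 with h | h
    · rw [← h]
      simp [gfun, Real.zero_rpow (by linarith : (1:ℝ) - φ ≠ 0), pden, Kc]
    · rw [pden, gfun, Kc]
      have hll : l ^ (1 - φ) = l * l ^ (-φ) := by
        rw [sub_eq_add_neg, Real.rpow_one_add' h.le (by intro hc; apply absurd hφ; linarith [neg_eq_of_add_eq_zero_right hc])]
      have hxx : x ^ (φ - 1) * x ^ (1 - φ) = 1 := by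
        rw [← Real.rpow_add hx]; norm_num
      have key : x ^ (φ - 1) * (x * l) ^ (1 - φ) = l * l ^ (-φ) := by
        rw [Real.mul_rpow hx.le h.le, ← mul_assoc, hxx, one_mul, hll]
      have he : Real.exp (-2 * l * x) = Real.exp (-2 * (x * l)) := by ring_nf
      calc l * Real.exp (-2 * l * x) * ((1 - φ) * Cphi φ ^ (φ - 1) * l ^ (-φ))
          = (1 - φ) * Cphi φ ^ (φ - 1) * ((l * l ^ (-φ)) * Real.exp (-2 * (x * l))) := by
            rw [he]; ring
        _ = _ := by rw [← key]; ring
  rw [intervalIntegral.integral_congr h2]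
  rw [intervalIntegral.integral_const_mul, intervalIntegral.integral_const_mul]
  have h3 : (∫ l in (0:ℝ)..(Cphi φ), gfun φ (x * l)) = x⁻¹ * Gfun φ (x * Cphi φ) := by
    rw [intervalIntegral.integral_comp_mul_left _ hx.ne', mul_zero, Gfun, smul_eq_mul]
  rw [h3]
  have h4 : x ^ (φ - 1) * x⁻¹ = x ^ (φ - 2) := by
    rw [← Real.rpow_neg_one x, ← Real.rpow_add hx]
    congr 1; ring
  calc Kc φ * (x ^ (φ - 1) * (x⁻¹ * Gfun φ (x * Cphi φ)))
      = Kc φ * (x ^ (φ - 1) * x⁻¹) * Gfun φ (x * Cphi φ) := by ring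
    _ = _ := by rw [h4]

lemma Ifun_bounds {φ α : ℝ} (hφ : φ < 1) (hα : 0 < α) {V : ℝ} (hV : 1 ≤ V) :
    Kc φ * Gfun φ (Cphi φ) * (∫ u in (1:ℝ)..V, u ^ ((α-1)/(α+1) + (φ-2))) ≤ Ifun φ α V ∧
    Ifun φ α V ≤ Kc φ * Hc φ * (∫ u in (1:ℝ)..V, u ^ ((α-1)/(α+1) + (φ-2))) := by
  have hC := Cphi_pos hφ
  have hK := Kc_pos hφ
  set β : ℝ := (α-1)/(α+1) + (φ-2) with hβ
  have hIeq : Ifun φ α V = ∫ u in (1:ℝ)..V, Kc φ * (u ^ β * Gfun φ (u * Cphi φ)) := by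
    apply intervalIntegral.integral_congr
    intro u hu
    rw [Set.uIcc_of_le hV] at hu
    have hu0 : (0:ℝ) < u := lt_of_lt_of_le one_pos hu.1
    show u ^ ((α-1)/(α+1)) * calJ φ u = Kc φ * (u ^ β * Gfun φ (u * Cphi φ))
    rw [calJ_eq hφ hu0, hβ, Real.rpow_add hu0]
    ring
  have hrp : ContinuousOn (fun u : ℝ => u ^ β) (Set.uIcc 1 V) := by
    intro u hu
    rw [Set.uIcc_of_le hV] at hu
    exact (Real.continuousAt_rpow_const u β
      (Or.inl (ne_of_gt (lt_of_lt_of_le one_pos hu.1)))).continuousWithinAt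
  have hGc : Continuous fun u : ℝ => Gfun φ (u * Cphi φ) :=
    (Gcont hφ).comp (by continuity)
  have hint1 : IntervalIntegrable (fun u => Kc φ * (u ^ β * Gfun φ (u * Cphi φ)))
      MeasureTheory.volume 1 V :=
    (continuousOn_const.mul (hrp.mul hGc.continuousOn)).intervalIntegrable
  have hint2 : IntervalIntegrable (fun u => (Kc φ * Gfun φ (Cphi φ)) * u ^ β)
      MeasureTheory.volume 1 V :=
    (continuousOn_const.mul hrp).intervalIntegrable
  have hint3 : IntervalIntegrable (fun u => (Kc φ * Hc φ) * u ^ β)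
      MeasureTheory.volume 1 V :=
    (continuousOn_const.mul hrp).intervalIntegrable
  constructor
  · rw [hIeq, ← intervalIntegral.integral_const_mul]
    apply intervalIntegral.integral_mono_on hV hint2 hint1
    intro u hu
    have hu0 : (0:ℝ) < u := lt_of_lt_of_le one_pos hu.1
    have hmono : Gfun φ (Cphi φ) ≤ Gfun φ (u * Cphi φ) :=
      Gmono hφ hC.le (le_mul_of_one_le_left hC.le hu.1)
    have h5 : 0 ≤ Kc φ * u ^ β := mul_nonneg hK.le (Real.rpow_nonneg hu0.le _)
    calc (Kc φ * Gfun φ (Cphi φ)) * u ^ β = (Kc φ * u ^ β) * Gfun φ (Cphi φ) := by ring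
      _ ≤ (Kc φ * u ^ β) * Gfun φ (u * Cphi φ) := mul_le_mul_of_nonneg_left hmono h5
      _ = Kc φ * (u ^ β * Gfun φ (u * Cphi φ)) := by ring
  · rw [hIeq, ← intervalIntegral.integral_const_mul]
    apply intervalIntegral.integral_mono_on hV hint1 hint3
    intro u hu
    have hu0 : (0:ℝ) < u := lt_of_lt_of_le one_pos hu.1
    have hmono : Gfun φ (u * Cphi φ) ≤ Hc φ :=
      G_le_H hφ (mul_nonneg hu0.le hC.le)
    have h5 : 0 ≤ Kc φ * u ^ β := mul_nonneg hK.le (Real.rpow_nonneg hu0.le _)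
    calc Kc φ * (u ^ β * Gfun φ (u * Cphi φ))
        = (Kc φ * u ^ β) * Gfun φ (u * Cphi φ) := by ring
      _ ≤ (Kc φ * u ^ β) * Hc φ := mul_le_mul_of_nonneg_left hmono h5
      _ = (Kc φ * Hc φ) * u ^ β := by ring

/-- Growth of the private-noise integral `I(V)` for `V ≥ 2`: of constant order when
`φ(α+1) < 2`, of order `V^{φ−2/(α+1)}` when `φ(α+1) > 2`, and of order `ln V`
when `φ(α+1) = 2`. -/
theorem noise_integral_asymptotics (φ α : ℝ) (hφ : φ < 1) (hα : 0 < α) :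
    ∃ c₁ c₂ : ℝ, 0 < c₁ ∧ c₁ ≤ c₂ ∧
      ∀ V : ℝ, 2 ≤ V →
        (φ * (α + 1) < 2 → c₁ ≤ Ifun φ α V ∧ Ifun φ α V ≤ c₂) ∧
        (2 < φ * (α + 1) →
          c₁ * V ^ (φ - 2 / (α + 1)) ≤ Ifun φ α V ∧
          Ifun φ α V ≤ c₂ * V ^ (φ - 2 / (α + 1))) ∧
        (φ * (α + 1) = 2 →
          c₁ * Real.log V ≤ Ifun φ α V ∧ Ifun φ α V ≤ c₂ * Real.log V) := by
  have ha1 : (0:ℝ) < α + 1 := by linarith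
  set β : ℝ := (α-1)/(α+1) + (φ-2) with hβdef
  set σ : ℝ := φ - 2/(α+1) with hσdef
  have hβσ : β + 1 = σ := by
    rw [hβdef, hσdef]; field_simp; ring
  set cJ : ℝ := Kc φ * Gfun φ (Cphi φ) with hcJ
  set CJ : ℝ := Kc φ * Hc φ with hCJ
  have hcJpos : 0 < cJ := mul_pos (Kc_pos hφ) (Gpos hφ (Cphi_pos hφ))
  have hcJCJ : cJ ≤ CJ :=
    mul_le_mul_of_nonneg_left (G_le_H hφ (Cphi_pos hφ).le) (Kc_pos hφ).le
  have hCJpos : 0 < CJ := lt_of_lt_of_le hcJpos hcJCJ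
  -- the explicit primitive when β ≠ -1
  have hF : ∀ V : ℝ, 1 ≤ V → β ≠ -1 →
      (∫ u in (1:ℝ)..V, u ^ β) = (V ^ (β+1) - 1)/(β+1) := by
    intro V hV hne
    rw [integral_rpow (Or.inr ⟨hne, by
      rw [Set.uIcc_of_le hV]; intro h0; exact absurd h0.1 (by norm_num)⟩)]
    simp [Real.one_rpow]
  rcases lt_trichotomy (φ * (α + 1)) 2 with hlt | heq | hgt
  · -- constant case : σ < 0
    have hσ0 : σ < 0 := by
      rw [hσdef, sub_neg]; exact (lt_div_iff₀ ha1).mpr hlt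
    have hne : β ≠ -1 := by intro h; rw [h] at hβσ; simp at hβσ; linarith
    have h2σ : (2:ℝ) ^ σ < 1 := Real.rpow_lt_one_of_one_lt_of_neg one_lt_two hσ0
    have hF2pos : 0 < ((2:ℝ) ^ σ - 1)/σ :=
      div_pos_iff.mpr (Or.inr ⟨by linarith, hσ0⟩)
    refine ⟨cJ * (((2:ℝ) ^ σ - 1)/σ), CJ * (-1/σ), mul_pos hcJpos hF2pos, ?_, ?_⟩
    · apply mul_le_mul hcJCJ ?_ hF2pos.le hCJpos.le
      have h1 : (0:ℝ) < 2 ^ σ := Real.rpow_pos_of_pos two_pos σ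
      have h2 : ((2:ℝ) ^ σ)/σ ≤ 0 := div_nonpos_iff.mpr (Or.inl ⟨h1.le, hσ0.le⟩)
      have h3 : ((2:ℝ) ^ σ - 1)/σ - (-1/σ) = ((2:ℝ) ^ σ)/σ := by ring
      linarith
    · intro V hV2
      have hV1 : (1:ℝ) ≤ V := by linarith
      obtain ⟨hlow, hup⟩ := Ifun_bounds hφ hα hV1
      rw [← hβdef] at hlow hup
      rw [hF V hV1 hne, hβσ] at hlow hup
      have hVσpos : (0:ℝ) < V ^ σ := Real.rpow_pos_of_pos (by linarith) σ
      have hVle2 : V ^ σ ≤ (2:ℝ) ^ σ :=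
        Real.rpow_le_rpow_of_nonpos two_pos hV2 hσ0.le
      refine ⟨fun _ => ⟨?_, ?_⟩, fun h => absurd h (by linarith),
        fun h => absurd h (by linarith)⟩
      · refine le_trans ?_ hlow
        apply mul_le_mul_of_nonneg_left ?_ hcJpos.le
        have h4 : (V ^ σ - 1)/σ - ((2:ℝ) ^ σ - 1)/σ = (V ^ σ - 2 ^ σ)/σ := by ring
        have h5 : (0:ℝ) ≤ (V ^ σ - 2 ^ σ)/σ :=
          div_nonneg_iff.mpr (Or.inr ⟨by linarith, hσ0.le⟩)
        linarith
      · refine le_trans hup ?_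
        apply mul_le_mul_of_nonneg_left ?_ hCJpos.le
        have h2 : (V ^ σ)/σ ≤ 0 := div_nonpos_iff.mpr (Or.inl ⟨hVσpos.le, hσ0.le⟩)
        have h3 : (V ^ σ - 1)/σ - (-1/σ) = (V ^ σ)/σ := by ring
        linarith
  · -- log case : σ = 0, β = -1
    have hσ0 : σ = 0 := by
      rw [hσdef, sub_eq_zero, eq_div_iff ha1.ne']; exact heq
    have hβ1 : β = -1 := by rw [hσ0] at hβσ; linarith
    refine ⟨cJ, CJ, hcJpos, hcJCJ, ?_⟩
    intro V hV2
    have hV1 : (1:ℝ) ≤ V := by linarith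
    obtain ⟨hlow, hup⟩ := Ifun_bounds hφ hα hV1
    rw [← hβdef] at hlow hup
    have hlogeq : (∫ u in (1:ℝ)..V, u ^ β) = Real.log V := by
      have : (∫ u in (1:ℝ)..V, u ^ β) = ∫ u in (1:ℝ)..V, u⁻¹ := by
        apply intervalIntegral.integral_congr
        intro u hu
        show u ^ β = u⁻¹
        rw [hβ1, Real.rpow_neg_one]
      rw [this, integral_inv_of_pos one_pos (by linarith), div_one]
    rw [hlogeq] at hlow hup
    exact ⟨fun h => absurd h (by linarith), fun h => absurd h (by linarith),
      fun _ => ⟨hlow, hup⟩⟩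
  · -- power case : σ > 0
    have hσ0 : 0 < σ := by
      rw [hσdef, sub_pos]; exact (div_lt_iff₀ ha1).mpr (by linarith)
    have hne : β ≠ -1 := by intro h; rw [h] at hβσ; simp at hβσ; linarith
    have h2σ : (2:ℝ) ^ (-σ) < 1 :=
      Real.rpow_lt_one_of_one_lt_of_neg one_lt_two (by linarith)
    have hinv : (2:ℝ) ^ (-σ) * 2 ^ σ = 1 := by
      rw [← Real.rpow_add two_pos, neg_add_cancel, Real.rpow_zero]
    have hc1pos : 0 < cJ * ((1 - (2:ℝ) ^ (-σ))/σ) :=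
      mul_pos hcJpos (div_pos (by linarith) hσ0)
    refine ⟨cJ * ((1 - (2:ℝ) ^ (-σ))/σ), CJ / σ, hc1pos, ?_, ?_⟩
    · rw [div_eq_mul_one_div CJ σ]
      apply mul_le_mul hcJCJ ?_ (div_pos (by linarith) hσ0).le hCJpos.le
      apply (div_le_div_iff_of_pos_right hσ0).mpr
      have : (0:ℝ) < 2 ^ (-σ) := Real.rpow_pos_of_pos two_pos _
      linarith
    · intro V hV2
      have hV1 : (1:ℝ) ≤ V := by linarith
      obtain ⟨hlow, hup⟩ := Ifun_bounds hφ hα hV1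
      rw [← hβdef] at hlow hup
      rw [hF V hV1 hne, hβσ] at hlow hup
      have hVσpos : (0:ℝ) < V ^ σ := Real.rpow_pos_of_pos (by linarith) σ
      have h2V : (2:ℝ) ^ σ ≤ V ^ σ :=
        Real.rpow_le_rpow (by norm_num) hV2 hσ0.le
      have hkey : 1 ≤ (2:ℝ) ^ (-σ) * V ^ σ := by
        calc (1:ℝ) = 2 ^ (-σ) * 2 ^ σ := hinv.symm
          _ ≤ 2 ^ (-σ) * V ^ σ :=
            mul_le_mul_of_nonneg_left h2V (Real.rpow_nonneg (by norm_num) _)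
      refine ⟨fun h => absurd h (by linarith), fun _ => ⟨?_, ?_⟩,
        fun h => absurd h (by linarith)⟩
      · refine le_trans ?_ hlow
        have h6 : ((1 - (2:ℝ) ^ (-σ)) * V ^ σ)/σ ≤ (V ^ σ - 1)/σ :=
          (div_le_div_iff_of_pos_right hσ0).mpr (by nlinarith)
        calc cJ * ((1 - (2:ℝ) ^ (-σ))/σ) * V ^ σ
            = cJ * (((1 - (2:ℝ) ^ (-σ)) * V ^ σ)/σ) := by ring
          _ ≤ cJ * ((V ^ σ - 1)/σ) := mul_le_mul_of_nonneg_left h6 hcJpos.le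
      · refine le_trans hup ?_
        have h6 : (V ^ σ - 1)/σ ≤ (V ^ σ)/σ :=
          (div_le_div_iff_of_pos_right hσ0).mpr (by linarith)
        calc CJ * ((V ^ σ - 1)/σ) ≤ CJ * ((V ^ σ)/σ) :=
            mul_le_mul_of_nonneg_left h6 hCJpos.le
          _ = CJ / σ * V ^ σ := by ring
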